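/- Let R be an LM-system. If f(s1,…,sm) reduces modulo R to its normal form g(t1,…,tn) with f ≠ g, then (f, g) is the root pair of some rule in R. -/

import Mathlib

/-! Basic first-order terms, positions, substitutions and rewriting. -/

inductive Term (F : Type) : Type
  | var : Nat → Term F
  | app : F → List (Term F) → Term F

namespace Term

def subst {F : Type} (σ : Nat → Term F) : Term F → Term F
  | var n => σ n
  | app f ts => app f (ts.attach.map fun ⟨t, _⟩ => t.subst σ)

def root {F : Type} : Term F → Option F
  | var _ => none
  | app f _ => some f

def label {F : Type} : Term F → F ⊕ Nat
  | var n => Sum.inr n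
  | app f _ => Sum.inl f

def IsVar {F : Type} : Term F → Prop
  | var _ => True
  | app _ _ => False

def varsL {F : Type} : Term F → List Nat
  | var n => [n]
  | app _ ts => (ts.attach.map fun ⟨t, _⟩ => t.varsL).flatten

end Term

abbrev Rule (F : Type) := Term F × Term F
abbrev TRS (F : Type) := Set (Rule F)

/-- `SubtermAt t p u` : the subterm of `t` at position `p` is `u`. -/
inductive SubtermAt {F : Type} : Term F → List Nat → Term F → Prop
  | here (t : Term F) : SubtermAt t [] t
  | there {f : F} {ts : List (Term F)} {i : Nat} {u : Term F} {p : List Nat} {v : Term F} :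
      ts[i]? = some u → SubtermAt u p v → SubtermAt (Term.app f ts) (i :: p) v

/-- `ReplaceAt t p v t'` : replacing the subterm of `t` at position `p` by `v` yields `t'`. -/
inductive ReplaceAt {F : Type} : Term F → List Nat → Term F → Term F → Prop
  | here (t u : Term F) : ReplaceAt t [] u u
  | there {f : F} {ts : List (Term F)} {i : Nat} {u : Term F} {p : List Nat} {v w : Term F} :
      ts[i]? = some u → ReplaceAt u p v w →
      ReplaceAt (Term.app f ts) (i :: p) v (Term.app f (ts.set i w))

variable {F : Type}

/-- One rewrite step using the given rule (at some position, with some substitution). -/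
def RuleStep (ρ : Rule F) (s t : Term F) : Prop :=
  ∃ (σ : Nat → Term F) (p : List Nat),
    SubtermAt s p (ρ.1.subst σ) ∧ ReplaceAt s p (ρ.2.subst σ) t

def OneStep (R : TRS F) (s t : Term F) : Prop := ∃ ρ ∈ R, RuleStep ρ s t

/-- A rewrite step at the root position. -/
def RootStep (R : TRS F) (s t : Term F) : Prop :=
  ∃ ρ ∈ R, ∃ σ : Nat → Term F, s = ρ.1.subst σ ∧ t = ρ.2.subst σ

def StarRW (R : TRS F) : Term F → Term F → Prop := Relation.ReflTransGen (OneStep R)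
def Plus (R : TRS F) : Term F → Term F → Prop := Relation.TransGen (OneStep R)
/-- Convertibility (the congruence / equational theory generated by `R`). -/
def Conv (R : TRS F) : Term F → Term F → Prop := Relation.EqvGen (OneStep R)
def Joinable (R : TRS F) (s t : Term F) : Prop := ∃ u, StarRW R s u ∧ StarRW R t u
def NormalForm (R : TRS F) (t : Term F) : Prop := ∀ u, ¬ OneStep R t u
/-- `t` is the `R`-normal form of `s`. -/
def NFof (R : TRS F) (s t : Term F) : Prop := StarRW R s t ∧ NormalForm R t
def Terminating (R : TRS F) : Prop := WellFounded (fun a b : Term F => OneStep R b a)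
def Confluent (R : TRS F) : Prop := ∀ s t u, StarRW R s t → StarRW R s u → Joinable R t u
def Convergent (R : TRS F) : Prop := Confluent R ∧ Terminating R

/-- every proper subterm is irreducible -/
def EpsIrreducible (R : TRS F) (t : Term F) : Prop :=
  ∀ p u, SubtermAt t p u → p ≠ [] → NormalForm R u

def InnermostRedex (R : TRS F) (t : Term F) : Prop :=
  EpsIrreducible R t ∧ ¬ NormalForm R t

/-- Forward-closed, via the one-step-to-normal-form characterization. -/
def FCclosed (R : TRS F) : Prop :=
  ∀ t, InnermostRedex R t → ∀ u, NFof R t u → OneStep R t u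

def Unifies (σ : Nat → Term F) (s t : Term F) : Prop := s.subst σ = t.subst σ

def IsMGU (σ : Nat → Term F) (s t : Term F) : Prop :=
  Unifies σ s t ∧ ∀ τ, Unifies τ s t → ∃ δ, ∀ x, τ x = (σ x).subst δ

def IsRenaming (ρ : Nat → Term F) : Prop :=
  ∃ f : Nat → Nat, Function.Injective f ∧ ∀ n, ρ n = Term.var (f n)

/-- Redundancy criterion for an oriented equation `e` whose right-hand side is
reachable from its left-hand side: some proper subterm of the lhs is reducible. -/
def Redundant (R : TRS F) (e : Rule F) : Prop :=
  ∃ p u, p ≠ ([] : List Nat) ∧ SubtermAt e.1 p u ∧ ¬ NormalForm R u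

/-- `R₁ ↝ R₂`: forward overlaps of rules of `R₂` (renamed apart) into
right-hand sides of rules of `R₁`, at non-variable positions, via an mgu. -/
def FStep (R₁ R₂ : TRS F) : TRS F :=
  { e | ∃ (l₁ r₁ l₂ r₂ : Term F) (ρ : Nat → Term F) (p : List Nat) (u : Term F)
          (σ : Nat → Term F) (r₁' : Term F),
      (l₁, r₁) ∈ R₁ ∧ (l₂, r₂) ∈ R₂ ∧ IsRenaming ρ ∧
      SubtermAt r₁ p u ∧ ¬ u.IsVar ∧ IsMGU σ u (l₂.subst ρ) ∧
      ReplaceAt r₁ p (r₂.subst ρ) r₁' ∧ e = (l₁.subst σ, r₁'.subst σ) }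

def FCiter (R : TRS F) : Nat → TRS F
  | 0 => R
  | k + 1 => FCiter R k ∪ { e | e ∈ FStep (FCiter R k) R ∧ ¬ Redundant (FCiter R k) e }

def FCinf (R : TRS F) : TRS F := ⋃ k, FCiter R k

/-- Forward-closed, via the forward-closure construction: `FC(R) = R`. -/
def ForwardClosedFC (R : TRS F) : Prop := FCinf R = R

/-- `RHS(R)`: `R` together with the conclusions of right-hand-side critical
pair inferences (second rule renamed apart). -/
def RHSset (R : TRS F) : TRS F :=
  R ∪ { e | ∃ (s t u₀ v₀ : Term F) (ρ σ : Nat → Term F), (s, t) ∈ R ∧ (u₀, v₀) ∈ R ∧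
        IsRenaming ρ ∧ IsMGU σ t (v₀.subst ρ) ∧
        s.subst σ ≠ (u₀.subst ρ).subst σ ∧ e = (s.subst σ, (u₀.subst ρ).subst σ) }

/-- the (unordered) pairs of root symbols of two equations coincide -/
def RootPairSimilar (e₁ e₂ : Rule F) : Prop :=
  (e₁.1.root = e₂.1.root ∧ e₁.2.root = e₂.2.root) ∨
  (e₁.1.root = e₂.2.root ∧ e₁.2.root = e₂.1.root)

def QuasiDet (E : TRS F) : Prop :=
  (∀ e ∈ E, ¬ e.1.IsVar ∧ ¬ e.2.IsVar) ∧
  (∀ e ∈ E, e.1.root ≠ e.2.root) ∧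
  (∀ e₁ ∈ E, ∀ e₂ ∈ E, e₁ ≠ e₂ → ¬ RootPairSimilar e₁ e₂)

def HasRootPairRepetition (E : TRS F) : Prop :=
  ∃ e₁ ∈ E, ∃ e₂ ∈ E, e₁ ≠ e₂ ∧ RootPairSimilar e₁ e₂

def VarPreserving (R : TRS F) : Prop :=
  ∀ e ∈ R, ∀ n, n ∈ Term.varsL e.1 ↔ n ∈ Term.varsL e.2

def RightReduced (R : TRS F) : Prop := ∀ e ∈ R, NormalForm R e.2

def AlmostLeftReduced (R : TRS F) : Prop :=
  ¬ ∃ (l₁ r₁ l₂ r₂ : Term F) (p : List Nat) (u : Term F) (σ : Nat → Term F),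
      (l₁, r₁) ∈ R ∧ (l₂, r₂) ∈ R ∧ p ≠ [] ∧ SubtermAt l₁ p u ∧ u = l₂.subst σ

def NonSubtermCollapsing (R : TRS F) : Prop :=
  ¬ ∃ (t u : Term F) (p : List Nat), p ≠ [] ∧ SubtermAt u p t ∧ Conv R t u

structure LMSystem (R : TRS F) : Prop where
  convergent : Convergent R
  almostLeftReduced : AlmostLeftReduced R
  rightReduced : RightReduced R
  nonCollapsing : NonSubtermCollapsing R
  forwardClosed : FCclosed R
  quasiDet : QuasiDet (RHSset R)

/-- the symbol (function symbol or variable) of a term at a position, if defined -/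
def labelAt {F : Type} : List Nat → Term F → Option (F ⊕ Nat)
  | [], t => some t.label
  | i :: p, Term.app _ ts => (ts[i]?).bind (labelAt p)
  | _ :: _, Term.var _ => none

/-- outermost distinguishing position -/
def ODP (s t : Term F) (p : List Nat) : Prop :=
  (labelAt p s ≠ none ∨ labelAt p t ≠ none) ∧
  labelAt p s ≠ labelAt p t ∧
  ∀ q, q <+: p → q ≠ p → labelAt q s = labelAt q t



/-! Normalizing the arguments first leads from `f(s₁,…,sₘ)` to a term `f(n₁,…,nₘ)` that still
reduces to `g(t₁,…,tₙ)` (confluence). It is reducible, as `f ≠ g`, while all its proper subterms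
are irreducible; forward-closedness then puts its normal form a single step away, and that step
must be at the root. So some rule `l → r` has `lσ = f(n₁,…,nₘ)` and `rσ = g(t₁,…,tₙ)`, and as
`l` and `r` are not variables (quasi-determinism), their roots are `f` and `g`. -/

theorem Term.root_subst {t : Term F} (ht : ¬ t.IsVar) (σ : Nat → Term F) :
    (t.subst σ).root = t.root := by
  cases t with
  | var n => exact absurd trivial ht
  | app g ts => simp only [Term.subst, Term.root]

section Rewriting

variable {R : TRS F}

theorem OneStep.app_congr {s s' : Term F} (h : OneStep R s s') (f : F)
    (pre post : List (Term F)) :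
    OneStep R (Term.app f (pre ++ s :: post)) (Term.app f (pre ++ s' :: post)) := by
  obtain ⟨ρ, hρ, σ, p, hsub, hrep⟩ := h
  have hget : (pre ++ s :: post)[pre.length]? = some s := by simp
  refine ⟨ρ, hρ, σ, pre.length :: p, .there hget hsub, ?_⟩
  simpa using ReplaceAt.there (f := f) hget hrep

theorem StarRW.app_congr {s s' : Term F} (h : StarRW R s s') (f : F)
    (pre post : List (Term F)) :
    StarRW R (Term.app f (pre ++ s :: post)) (Term.app f (pre ++ s' :: post)) :=
  Relation.ReflTransGen.lift (fun x => Term.app f (pre ++ x :: post))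
    (fun _ _ hstep => hstep.app_congr f pre post) _ _ h

theorem StarRW.app_args {ss ns : List (Term F)} (h : List.Forall₂ (StarRW R) ss ns) (f : F)
    (pre : List (Term F)) : StarRW R (Term.app f (pre ++ ss)) (Term.app f (pre ++ ns)) := by
  induction h generalizing pre with
  | nil => exact Relation.ReflTransGen.refl
  | @cons s n ss ns hsn _ ih =>
    refine (hsn.app_congr f pre ss).trans ?_
    have hrest := ih (pre ++ [n])
    simp only [List.append_assoc, List.singleton_append] at hrest
    exact hrest

theorem NormalForm.of_subtermAt {t u : Term F} {p : List Nat} (hn : NormalForm R t)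
    (h : SubtermAt t p u) : NormalForm R u := by
  induction h with
  | here => exact hn
  | there hget _ ih =>
    exact ih fun w ⟨ρ, hρ, σ, q, hsub, hrep⟩ =>
      hn _ ⟨ρ, hρ, σ, _ :: q, .there hget hsub, .there hget hrep⟩

theorem NormalForm.eq_of_starRW {t u : Term F} (hn : NormalForm R t) (h : StarRW R t u) :
    u = t := by
  rcases Relation.ReflTransGen.cases_head h with rfl | ⟨c, hc, _⟩
  · rfl
  · exact absurd hc (hn c)

theorem Confluent.starRW_of_nfOf {s t u : Term F} (hC : Confluent R)
    (hst : StarRW R s t) (hsu : NFof R s u) : StarRW R t u := by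
  obtain ⟨v, htv, huv⟩ := hC s t u hst hsu.1
  rwa [hsu.2.eq_of_starRW huv] at htv

theorem Terminating.exists_nfOf (hT : Terminating R) (s : Term F) : ∃ t, NFof R s t := by
  induction s using hT.induction with
  | _ s ih =>
    by_cases hs : NormalForm R s
    · exact ⟨s, Relation.ReflTransGen.refl, hs⟩
    · obtain ⟨u, hu⟩ := not_forall_not.mp hs
      obtain ⟨t, hut, ht⟩ := ih u hu
      exact ⟨t, Relation.ReflTransGen.head hu hut, ht⟩

theorem Terminating.exists_normal_args (hT : Terminating R) (ss : List (Term F)) :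
    ∃ ns, List.Forall₂ (StarRW R) ss ns ∧ ∀ n ∈ ns, NormalForm R n := by
  induction ss with
  | nil => exact ⟨[], .nil, by simp⟩
  | cons s ss ih =>
    obtain ⟨n, hsn, hn⟩ := hT.exists_nfOf s
    obtain ⟨ns, hss, hns⟩ := ih
    exact ⟨n :: ns, .cons hsn hss, List.forall_mem_cons.mpr ⟨hn, hns⟩⟩

theorem epsIrreducible_app {ns : List (Term F)} (hns : ∀ n ∈ ns, NormalForm R n) (f : F) :
    EpsIrreducible R (Term.app f ns) := by
  intro p u hsub hp
  cases hsub with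
  | here => exact absurd rfl hp
  | there hget hsub' => exact (hns _ (List.mem_of_getElem? hget)).of_subtermAt hsub'

theorem RootStep.of_oneStep {t u : Term F} (hε : EpsIrreducible R t) (h : OneStep R t u) :
    RootStep R t u := by
  obtain ⟨ρ, hρ, σ, p, hsub, hrep⟩ := h
  rcases p with _ | ⟨i, q⟩
  · generalize hl : ρ.1.subst σ = l at hsub
    generalize hr : ρ.2.subst σ = r at hrep
    cases hsub
    cases hrep
    exact ⟨ρ, hρ, σ, hl.symm, hr.symm⟩
  · exact absurd ⟨ρ, hρ, σ, [], .here _, .here _ _⟩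
      (hε _ _ hsub (List.cons_ne_nil i q) (ρ.2.subst σ))

theorem exists_rootStep_of_nfOf (hconv : Convergent R) (hfc : FCclosed R) {f : F}
    {ss : List (Term F)} {u : Term F} (h : NFof R (Term.app f ss) u) (hu : u.root ≠ some f) :
    ∃ ns, RootStep R (Term.app f ns) u := by
  obtain ⟨ns, hss, hns⟩ := hconv.2.exists_normal_args ss
  have hreach : StarRW R (Term.app f ns) u := hconv.1.starRW_of_nfOf (StarRW.app_args hss f []) h
  have hred : ¬ NormalForm R (Term.app f ns) := fun hn => hu (by rw [hn.eq_of_starRW hreach]; rfl)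
  have hε : EpsIrreducible R (Term.app f ns) := epsIrreducible_app hns f
  exact ⟨ns, .of_oneStep hε (hfc _ ⟨hε, hred⟩ _ ⟨hreach, h.2⟩)⟩

end Rewriting

/-- if a term with root `f` normalizes to a term with root `g ≠ f`,
then `(f, g)` is the root pair of some rule of the LM-system. -/
theorem root_pair_of_normalization {F : Type} (R : TRS F) (hlm : LMSystem R)
    (f g : F) (ss ts : List (Term F)) (hfg : f ≠ g)
    (h : NFof R (Term.app f ss) (Term.app g ts)) :
    ∃ e ∈ R, e.1.root = some f ∧ e.2.root = some g := by
  obtain ⟨ns, ρ, hρ, σ, hl, hr⟩ :=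
    exists_rootStep_of_nfOf hlm.convergent hlm.forwardClosed h
      (by simpa [Term.root] using hfg.symm)
  obtain ⟨hl_var, hr_var⟩ := hlm.quasiDet.1 ρ (Or.inl hρ)
  exact ⟨ρ, hρ, by rw [← Term.root_subst hl_var σ, ← hl]; rfl,
    by rw [← Term.root_subst hr_var σ, ← hr]; rfl⟩
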